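/- Fix q ∈ ℂ with q ≠ 0, q ≠ 1, q not a root of unity, and p ∈ ℂ with p² = q. Define the continuous q-Hermite polynomials H_m ∈ Polynomial ℂ by H_0 = 1, H_1 = 2X, and H_{m+1}(x) = 2x·H_m(x) − (1 − q^m)·H_{m−1}(x) for m ≥ 1. Then for every n ∈ ℕ and every z ∈ ℂ∖{0} for which the denominators x(pz) − x(z/p), x(p²z) − x(z) and x(z) − x(z/p²) are all nonzero, the function y(z) := H_n.eval(x(z)) satisfies ((2·x(z)² − 1)/2)·(𝔻(𝔻y))(z) − (2p/(q − 1))·x(z)·(𝕊(𝔻y))(z) + (2·q·p·(q^n − 1)/(q^n·(q − 1)²))·y(z) = 0. -/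
import Mathlib


open Complex

/-- The q-quadratic lattice x(z) = (z + z⁻¹)/2. -/
noncomputable def lat (z : ℂ) : ℂ := (z + z⁻¹) / 2

/-- Divided-difference operator on the q-quadratic lattice (p² = q). -/
noncomputable def Dq (p : ℂ) (g : ℂ → ℂ) (z : ℂ) : ℂ :=
  (g (p * z) - g (z / p)) / (lat (p * z) - lat (z / p))

/-- Averaging operator on the q-quadratic lattice (p² = q). -/
noncomputable def Sq (p : ℂ) (g : ℂ → ℂ) (z : ℂ) : ℂ :=
  (g (p * z) + g (z / p)) / 2


namespace S17

noncomputable def cc (q p : ℂ) (n : ℕ) : ℂ := 2*p*(q^n-1)/((q-1)*p^n)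
noncomputable def al (p : ℂ) (n : ℕ) : ℂ := (p^(2*n)+1)/(2*p^n)
noncomputable def be (q p : ℂ) (n : ℕ) : ℂ := -((1-q^n)*(q-q^n))/(2*q*p^n)

variable {q p : ℂ}

lemma p_ne (hq0 : q ≠ 0) (hp : p^2 = q) : p ≠ 0 := by
  intro h; apply hq0; rw [← hp, h]; ring

lemma q1_ne (hq1 : q ≠ 1) : q - 1 ≠ 0 := sub_ne_zero.mpr hq1

lemma ccX (hq1 : q ≠ 1) (h0 : p ≠ 0) (n : ℕ) :
    cc q p n * ((q-1)*p^n) = 2*p*(q^n-1) :=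
  div_mul_cancel₀ _ (mul_ne_zero (q1_ne hq1) (pow_ne_zero _ h0))

lemma alX (h0 : p ≠ 0) (n : ℕ) : al p n * (2*p^n) = p^(2*n)+1 :=
  div_mul_cancel₀ _ (mul_ne_zero two_ne_zero (pow_ne_zero _ h0))

lemma beX (hq0 : q ≠ 0) (h0 : p ≠ 0) (n : ℕ) :
    be q p n * (2*q*p^n) = -((1-q^n)*(q-q^n)) :=
  div_mul_cancel₀ _ (by exact mul_ne_zero (mul_ne_zero two_ne_zero hq0) (pow_ne_zero _ h0))

lemma cc0 : cc q p 0 = 0 := by simp [cc]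
lemma al0 : al p 0 = 1 := by simp [al]
lemma be0 : be q p 0 = 0 := by simp [be]
lemma be1 : be q p 1 = 0 := by simp [be]
lemma cc1 (hq1 : q ≠ 1) (h0 : p ≠ 0) : cc q p 1 = 2 := by
  have h1 := q1_ne hq1
  have h2 : cc q p 1 * ((q-1)*p^1) = 2 * ((q-1)*p^1) := by
    linear_combination ccX hq1 h0 1
  exact mul_right_cancel₀ (mul_ne_zero h1 (pow_ne_zero _ h0)) h2


lemma id1 (hq0 : q ≠ 0) (hq1 : q ≠ 1) (hp : p^2 = q) (n : ℕ) :
    4*p*al p (n+1) + (p^2+1)*cc q p (n+1) = 2*p*cc q p (n+2) := by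
  have h0 := p_ne hq0 hp
  subst hp
  refine mul_left_cancel₀ (show ((p^2-1) * p^(n+2) : ℂ) ≠ 0 from
    mul_ne_zero (q1_ne hq1) (pow_ne_zero _ h0)) ?_
  linear_combination (2*p^2*(p^2-1)) * alX h0 (n+1) + ((p^2+1)*p) * ccX hq1 h0 (n+1)
    + (-2*p) * ccX hq1 h0 (n+2)

lemma id2 (hq0 : q ≠ 0) (hq1 : q ≠ 1) (hp : p^2 = q) (n : ℕ) :
    4*p*be q p (n+1) + (p^2+1)*cc q p (n+1)*(1-q^n) - 2*p*(1-q^(n+1))*cc q p n = 0 := by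
  have h0 := p_ne hq0 hp
  subst hp
  refine mul_left_cancel₀ (show ((p^2-1) * p^2 * p^(n+2) : ℂ) ≠ 0 from
    mul_ne_zero (mul_ne_zero (q1_ne hq1) (pow_ne_zero _ h0)) (pow_ne_zero _ h0)) ?_
  linear_combination (2*p^2*(p^2-1)) * beX hq0 h0 (n+1)
    + (p^2*p*(p^2+1)*(1-(p^2)^n)) * ccX hq1 h0 (n+1)
    + (-2*p^3*p^2*(1-(p^2)^(n+1))) * ccX hq1 h0 n

lemma id3 (hq0 : q ≠ 0) (hq1 : q ≠ 1) (hp : p^2 = q) (n : ℕ) :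
    4*p*(p^2+1)*al p (n+1) + (p^2-1)^2*cc q p (n+1) = 8*p^2*al p (n+2) := by
  have h0 := p_ne hq0 hp
  subst hp
  refine mul_left_cancel₀ (show ((p^2-1) * p^(n+2) : ℂ) ≠ 0 from
    mul_ne_zero (q1_ne hq1) (pow_ne_zero _ h0)) ?_
  linear_combination (2*(p^2-1)*p^2*(p^2+1)) * alX h0 (n+1)
    + ((p^2-1)^2*p) * ccX hq1 h0 (n+1) + (-4*p^2*(p^2-1)) * alX h0 (n+2)

lemma id4 (hq0 : q ≠ 0) (hq1 : q ≠ 1) (hp : p^2 = q) (n : ℕ) :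
    4*p*(p^2+1)*(al p (n+1)*(1-q^(n+1)) + be q p (n+1))
      + (p^2-1)^2*cc q p (n+1)*((1-q^(n+1)) + (1-q^n) - 4)
      - 8*p^2*(1-q^(n+1))*al p n = 8*p^2*be q p (n+2) := by
  have h0 := p_ne hq0 hp
  subst hp
  refine mul_left_cancel₀ (show ((p^2-1) * p^2 * p^(n+2) : ℂ) ≠ 0 from
    mul_ne_zero (mul_ne_zero (q1_ne hq1) (pow_ne_zero _ h0)) (pow_ne_zero _ h0)) ?_
  linear_combination (2*(p^2-1)*p^2*p^2*(p^2+1)*(1-(p^2)^(n+1))) * alX h0 (n+1)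
    + (2*(p^2-1)*p^2*(p^2+1)) * beX hq0 h0 (n+1)
    + (p^2*p*(p^2-1)^2*((1-(p^2)^(n+1))+(1-(p^2)^n)-4)) * ccX hq1 h0 (n+1)
    + (-4*(p^2-1)*p^2*p^4*(1-(p^2)^(n+1))) * alX h0 n
    + (-4*(p^2-1)*p^2) * beX hq0 h0 (n+2)

lemma id5 (hq0 : q ≠ 0) (hq1 : q ≠ 1) (hp : p^2 = q) (n : ℕ) :
    4*p*(p^2+1)*be q p (n+1)*(1-q^(n-1))
      + (p^2-1)^2*cc q p (n+1)*(1-q^n)*(1-q^(n-1))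
      - 8*p^2*(1-q^(n+1))*be q p n = 0 := by
  have h0 := p_ne hq0 hp
  match n with
  | 0 => simp [be0, be1]
  | (m+1) =>
    subst hp
    simp only [Nat.add_sub_cancel]
    refine mul_left_cancel₀ (show ((p^2-1) * p^2 * p^(m+3) : ℂ) ≠ 0 from
      mul_ne_zero (mul_ne_zero (q1_ne hq1) (pow_ne_zero _ h0)) (pow_ne_zero _ h0)) ?_
    linear_combination (2*(p^2-1)*p^2*(p^2+1)*(1-(p^2)^m)) * beX hq0 h0 (m+2)
      + (p^2*p*(p^2-1)^2*(1-(p^2)^(m+1))*(1-(p^2)^m)) * ccX hq1 h0 (m+2)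
      + (-4*p^2*p^2*(1-(p^2)^(m+2))*(p^2-1)) * beX hq0 h0 (m+1)

lemma idA (hq0 : q ≠ 0) (hq1 : q ≠ 1) (hp : p^2 = q) (n : ℕ) :
    cc q p n * cc q p (n-1) * (q^n*(q-1)^2) - 4*p*(q-1)*q^n*(cc q p n * al p (n-1))
      + 8*q*p*(q^n-1) = 0 := by
  have h0 := p_ne hq0 hp
  match n with
  | 0 => simp [cc0]
  | (m+1) =>
    subst hp
    simp only [Nat.add_sub_cancel]
    refine mul_left_cancel₀ (show ((p^2-1) * p^(m+1) * ((p^2-1) * p^m) * (2*p^m) : ℂ) ≠ 0 from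
      mul_ne_zero (mul_ne_zero (mul_ne_zero (q1_ne hq1) (pow_ne_zero _ h0))
        (mul_ne_zero (q1_ne hq1) (pow_ne_zero _ h0))) (mul_ne_zero two_ne_zero (pow_ne_zero _ h0))) ?_
    linear_combination
      (((p^2-1)*p^m)*(2*p^m)*(cc (p^2) p m*((p^2)^(m+1)*(p^2-1)^2) - 4*p*(p^2-1)*(p^2)^(m+1)*al p m)) * ccX hq1 h0 (m+1)
      + ((2*p*((p^2)^(m+1)-1))*(2*p^m)*((p^2)^(m+1)*(p^2-1)^2)) * ccX hq1 h0 m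
      + (-((2*p*((p^2)^(m+1)-1))*((p^2-1)*p^m)*4*p*(p^2-1)*(p^2)^(m+1))) * alX h0 m

lemma idB (hq0 : q ≠ 0) (hq1 : q ≠ 1) (hp : p^2 = q) (n : ℕ) :
    cc q p n * cc q p (n-1) * ((q-1)*((1-q^(n-1)) + (1-q^(n-2)) - 2))
      - 4*p*(cc q p n * (al p (n-1)*(1-q^(n-1)) + be q p (n-1))) = 0 := by
  have h0 := p_ne hq0 hp
  match n with
  | 0 => simp [cc0]
  | 1 => simp [cc0, be0, al0]
  | (m+2) =>
    subst hp
    simp only [show m+2-1 = m+1 from rfl, show m+2-2 = m from rfl]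
    refine mul_left_cancel₀ (show ((p^2-1)*p^(m+2) * ((p^2-1)*p^(m+1)) * (2*p^(m+1)) * (2*p^2*p^(m+1)) : ℂ) ≠ 0 from
      mul_ne_zero (mul_ne_zero (mul_ne_zero
        (mul_ne_zero (q1_ne hq1) (pow_ne_zero _ h0))
        (mul_ne_zero (q1_ne hq1) (pow_ne_zero _ h0)))
        (mul_ne_zero two_ne_zero (pow_ne_zero _ h0)))
        (mul_ne_zero (mul_ne_zero two_ne_zero (pow_ne_zero 2 h0)) (pow_ne_zero _ h0))) ?_
    linear_combination
      ((((p^2-1)*p^(m+1)) * (2*p^(m+1)) * (2*p^2*p^(m+1)))*(cc (p^2) p (m+1)*((p^2-1)*((1-(p^2)^(m+1)) + (1-(p^2)^m) - 2)) - 4*p*(al p (m+1)*(1-(p^2)^(m+1)) + be (p^2) p (m+1)))) * ccX hq1 h0 (m+2)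
      + ((2*p*((p^2)^(m+2)-1)) * ((2*p^(m+1)) * (2*p^2*p^(m+1))) * ((p^2-1)*((1-(p^2)^(m+1)) + (1-(p^2)^m) - 2))) * ccX hq1 h0 (m+1)
      + (-((2*p*((p^2)^(m+2)-1)) * (((p^2-1)*p^(m+1)) * (2*p^2*p^(m+1))) * 4*p*(1-(p^2)^(m+1)))) * alX h0 (m+1)
      + (-((2*p*((p^2)^(m+2)-1)) * (((p^2-1)*p^(m+1)) * (2*p^(m+1))) * 4*p)) * beX hq0 h0 (m+1)

lemma idC (hq0 : q ≠ 0) (hq1 : q ≠ 1) (hp : p^2 = q) (n : ℕ) :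
    cc q p n * cc q p (n-1) * ((q-1)*(1-q^(n-2))*(1-q^(n-3)))
      - 4*p*(cc q p n * be q p (n-1)) * (1-q^(n-3)) = 0 := by
  have h0 := p_ne hq0 hp
  match n with
  | 0 => simp [cc0]
  | 1 => simp [cc0, be0]
  | 2 => simp [be1]
  | (m+3) =>
    subst hp
    simp only [show m+3-1 = m+2 from rfl, show m+3-2 = m+1 from rfl, show m+3-3 = m from rfl]
    refine mul_left_cancel₀ (show ((p^2-1)*p^(m+3) * ((p^2-1)*p^(m+2)) * (2*p^2*p^(m+2)) : ℂ) ≠ 0 from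
      mul_ne_zero (mul_ne_zero
        (mul_ne_zero (q1_ne hq1) (pow_ne_zero _ h0))
        (mul_ne_zero (q1_ne hq1) (pow_ne_zero _ h0)))
        (mul_ne_zero (mul_ne_zero two_ne_zero (pow_ne_zero 2 h0)) (pow_ne_zero _ h0))) ?_
    linear_combination
      ((((p^2-1)*p^(m+2)) * (2*p^2*p^(m+2)))*(cc (p^2) p (m+2)*((p^2-1)*(1-(p^2)^(m+1))*(1-(p^2)^m)) - 4*p*(be (p^2) p (m+2))*(1-(p^2)^m))) * ccX hq1 h0 (m+3)
      + ((2*p*((p^2)^(m+3)-1)) * (2*p^2*p^(m+2)) * ((p^2-1)*(1-(p^2)^(m+1))*(1-(p^2)^m))) * ccX hq1 h0 (m+2)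
      + (-((2*p*((p^2)^(m+3)-1)) * ((p^2-1)*p^(m+2)) * 4*p*(1-(p^2)^m))) * beX hq0 h0 (m+2)

end S17

namespace S17
variable {q p z : ℂ}

lemma latS (hz : z ≠ 0) (h0 : p ≠ 0) :
    p * (lat (p*z) + lat (z/p)) = (p^2+1) * lat z := by
  simp only [lat]; field_simp; ring

lemma latD2 (hz : z ≠ 0) (h0 : p ≠ 0) :
    p^2 * (lat (p*z) - lat (z/p))^2 = (p^2-1)^2 * ((lat z)^2 - 1) := by
  simp only [lat]; field_simp; ring

section poly
variable (q : ℂ) (H : ℕ → Polynomial ℂ)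
variable (hH0 : H 0 = 1) (hH1 : H 1 = Polynomial.C 2 * Polynomial.X)
variable (hHrec : ∀ m : ℕ, 1 ≤ m →
      H (m+1) = Polynomial.C 2 * Polynomial.X * H m - Polynomial.C (1 - q^m) * H (m-1))

include hH0 hH1 hHrec in
lemma Xrec (m : ℕ) (x : ℂ) :
    2*x*(H m).eval x = (H (m+1)).eval x + (1-q^m) * (H (m-1)).eval x := by
  match m with
  | 0 => simp [hH0, hH1]
  | (k+1) =>
    rw [hHrec (k+1) (by omega)]
    simp only [show k+1-1 = k from rfl, Polynomial.eval_sub, Polynomial.eval_mul,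
      Polynomial.eval_C, Polynomial.eval_X]
    ring

include hH0 hH1 hHrec in
lemma Xg (n : ℕ) (x : ℂ) :
    (1-q^n) * (2*x*(H (n-1)).eval x)
      = (1-q^n) * ((H n).eval x + (1-q^(n-1)) * (H (n-2)).eval x) := by
  match n with
  | 0 => simp
  | (k+1) =>
    simp only [show k+1-1 = k from rfl, show k+1-2 = k-1 from rfl]
    exact congrArg (fun t => (1-q^(k+1)) * t) (Xrec q H hH0 hH1 hHrec k x)

end poly
end S17

namespace S17
variable {q p : ℂ}

section poly
variable (H : ℕ → Polynomial ℂ)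

lemma DS (hq0 : q ≠ 0) (hq1 : q ≠ 1) (hp : p^2 = q)
    (hH0 : H 0 = 1) (hH1 : H 1 = Polynomial.C 2 * Polynomial.X)
    (hHrec : ∀ m : ℕ, 1 ≤ m →
      H (m+1) = Polynomial.C 2 * Polynomial.X * H m - Polynomial.C (1 - q^m) * H (m-1)) :
    ∀ n : ℕ, ∀ z : ℂ, z ≠ 0 →
      ((H n).eval (lat (p*z)) - (H n).eval (lat (z/p))
          = cc q p n * (H (n-1)).eval (lat z) * (lat (p*z) - lat (z/p))
      ∧ (H n).eval (lat (p*z)) + (H n).eval (lat (z/p))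
          = 2*(al p n * (H n).eval (lat z) + be q p n * (H (n-2)).eval (lat z))) := by
  have h0 : p ≠ 0 := p_ne hq0 hp
  intro n
  induction n using Nat.strong_induction_on with
  | _ n ih =>
  intro z hz
  match n, ih with
  | 0, _ => constructor <;> (simp [hH0, cc0, al0, be0]; try norm_num)
  | 1, _ =>
    constructor
    · simp only [hH1, hH0, show (1:ℕ)-1 = 0 from rfl, Polynomial.eval_mul,
        Polynomial.eval_C, Polynomial.eval_X, Polynomial.eval_one]
      rw [cc1 hq1 h0]; ring
    · simp only [hH1, hH0, show (1:ℕ)-2 = 0 from rfl, Polynomial.eval_mul,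
        Polynomial.eval_C, Polynomial.eval_X, Polynomial.eval_one]
      rw [be1]
      refine mul_left_cancel₀ h0 ?_
      linear_combination 2 * latS hz h0 + (-2*lat z) * alX h0 1
  | (m+2), ih =>
    obtain ⟨e1, e2⟩ := ih (m+1) (by omega) z hz
    obtain ⟨e3, e4⟩ := ih m (by omega) z hz
    simp only [show m+1-1 = m from rfl, show m+1-2 = m-1 from rfl] at e1 e2
    have hev : ∀ x : ℂ, (H (m+2)).eval x
        = 2*x*(H (m+1)).eval x - (1-q^(m+1))*(H m).eval x := by
      intro x
      rw [show m+2 = (m+1)+1 from rfl, hHrec (m+1) (by omega)]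
      simp only [show m+1-1 = m from rfl, Polynomial.eval_sub, Polynomial.eval_mul,
        Polynomial.eval_C, Polynomial.eval_X]
    have hS := latS hz h0
    have hD2 := latD2 hz h0
    have hXm := Xrec q H hH0 hH1 hHrec m (lat z)
    have hXm1 := Xrec q H hH0 hH1 hHrec (m+1) (lat z)
    simp only [show m+1-1 = m from rfl] at hXm1
    have hXg := Xg q H hH0 hH1 hHrec m (lat z)
    have hXbe : be q p (m+1) * (2*lat z*(H (m-1)).eval (lat z))
        = be q p (m+1) * ((H m).eval (lat z) + (1-q^(m-1)) * (H (m-2)).eval (lat z)) := by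
      match m with
      | 0 => norm_num [be1]
      | (k+1) =>
        simp only [show k+1-1 = k from rfl, show k+1-2 = k-1 from rfl]
        exact congrArg (fun t => be q p (k+2) * t) (Xrec q H hH0 hH1 hHrec k (lat z))
    constructor
    · simp only [show m+2-1 = m+1 from rfl]
      rw [hev, hev]
      refine mul_left_cancel₀ (show (2*p : ℂ) ≠ 0 from mul_ne_zero two_ne_zero h0) ?_
      linear_combination (2*p*(lat (p*z)+lat (z/p))) * e1
        + (2*p*(lat (p*z)-lat (z/p))) * e2
        + (-(2*p*(1-q^(m+1)))) * e3
        + (2*cc q p (m+1)*((H m).eval (lat z))*(lat (p*z)-lat (z/p))) * hS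
        + ((p^2+1)*cc q p (m+1)*(lat (p*z)-lat (z/p))) * hXm
        + ((lat (p*z)-lat (z/p))*((H (m+1)).eval (lat z))) * id1 hq0 hq1 hp m
        + ((lat (p*z)-lat (z/p))*((H (m-1)).eval (lat z))) * id2 hq0 hq1 hp m
    · simp only [show m+2-2 = m from rfl]
      rw [hev, hev]
      refine mul_left_cancel₀ (show (8*p^2 : ℂ) ≠ 0 from
        mul_ne_zero (by norm_num) (pow_ne_zero _ h0)) ?_
      linear_combination
        (8*p^2*(lat (p*z)-lat (z/p))) * e1
        + (8*p*(p^2+1)*lat z) * e2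
        + (-(8*p^2*(1-q^(m+1)))) * e4
        + (8*p*((H (m+1)).eval (lat (p*z)) + (H (m+1)).eval (lat (z/p)))) * hS
        + (8*cc q p (m+1)*((H m).eval (lat z))) * hD2
        + (4*(p^2-1)^2*cc q p (m+1)*lat z) * hXm
        + (8*p*(p^2+1)*al p (m+1) + 2*(p^2-1)^2*cc q p (m+1)) * hXm1
        + (2*(p^2-1)^2*cc q p (m+1)) * hXg
        + (8*p*(p^2+1)) * hXbe
        + (2*((H (m+2)).eval (lat z))) * id3 hq0 hq1 hp m
        + (2*((H m).eval (lat z))) * id4 hq0 hq1 hp m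
        + (2*((H (m-2)).eval (lat z))) * id5 hq0 hq1 hp m

end poly
end S17

open S17

theorem stmt_17 (q p : ℂ) (hq0 : q ≠ 0) (hq1 : q ≠ 1) (hqru : ∀ m : ℕ, 0 < m → q ^ m ≠ 1)
    (hp : p^2 = q) (H : ℕ → Polynomial ℂ)
    (hH0 : H 0 = 1)
    (hH1 : H 1 = Polynomial.C 2 * Polynomial.X)
    (hHrec : ∀ m : ℕ, 1 ≤ m →
      H (m+1) = Polynomial.C 2 * Polynomial.X * H m - Polynomial.C (1 - q^m) * H (m-1)) :
    ∀ (n : ℕ) (z : ℂ), z ≠ 0 →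
      lat (p * z) - lat (z / p) ≠ 0 →
      lat (p^2 * z) - lat z ≠ 0 →
      lat z - lat (z / p^2) ≠ 0 →
      ((2 * (lat z)^2 - 1) / 2) * Dq p (Dq p (fun w => (H n).eval (lat w))) z
        - (2 * p / (q - 1)) * lat z * Sq p (Dq p (fun w => (H n).eval (lat w))) z
        + (2 * q * p * (q^n - 1) / (q^n * (q - 1)^2)) * (H n).eval (lat z) = 0 := by
  intro n z hz h1 h2 h3
  have h0 : p ≠ 0 := p_ne hq0 hp
  have DSl := DS H hq0 hq1 hp hH0 hH1 hHrec
  have hpz : p*z ≠ 0 := mul_ne_zero h0 hz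
  have hzp : z/p ≠ 0 := div_ne_zero hz h0
  have hd2 : lat (p*(p*z)) - lat ((p*z)/p) ≠ 0 := by
    rw [show p*(p*z) = p^2*z from by ring, mul_div_cancel_left₀ z h0]; exact h2
  have hd3 : lat (p*(z/p)) - lat ((z/p)/p) ≠ 0 := by
    rw [show p*(z/p) = z from by field_simp, show (z/p)/p = z/p^2 from by rw [div_div, ← sq]]
    exact h3
  have dpz : Dq p (fun w => (H n).eval (lat w)) (p*z)
      = cc q p n * (H (n-1)).eval (lat (p*z)) := by
    show ((H n).eval (lat (p*(p*z))) - (H n).eval (lat ((p*z)/p)))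
        / (lat (p*(p*z)) - lat ((p*z)/p)) = _
    rw [(DSl n (p*z) hpz).1]
    exact mul_div_cancel_right₀ _ hd2
  have dzp : Dq p (fun w => (H n).eval (lat w)) (z/p)
      = cc q p n * (H (n-1)).eval (lat (z/p)) := by
    show ((H n).eval (lat (p*(z/p))) - (H n).eval (lat ((z/p)/p)))
        / (lat (p*(z/p)) - lat ((z/p)/p)) = _
    rw [(DSl n (z/p) hzp).1]
    exact mul_div_cancel_right₀ _ hd3
  have hDD : Dq p (Dq p (fun w => (H n).eval (lat w))) z
      = cc q p n * cc q p (n-1) * (H (n-2)).eval (lat z) := by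
    show (Dq p (fun w => (H n).eval (lat w)) (p*z) - Dq p (fun w => (H n).eval (lat w)) (z/p))
        / (lat (p*z) - lat (z/p)) = _
    rw [dpz, dzp, div_eq_iff h1]
    have hD1 := (DSl (n-1) z hz).1
    simp only [show n-1-1 = n-2 from rfl] at hD1
    linear_combination (cc q p n) * hD1
  have hSD : Sq p (Dq p (fun w => (H n).eval (lat w))) z
      = cc q p n * (al p (n-1) * (H (n-1)).eval (lat z)
          + be q p (n-1) * (H (n-3)).eval (lat z)) := by
    show (Dq p (fun w => (H n).eval (lat w)) (p*z) + Dq p (fun w => (H n).eval (lat w)) (z/p))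
        / 2 = _
    rw [dpz, dzp]
    have hS1 := (DSl (n-1) z hz).2
    simp only [show n-1-2 = n-3 from rfl] at hS1
    rw [div_eq_iff (two_ne_zero)]
    linear_combination (cc q p n) * hS1
  have XA : cc q p n * (2*lat z*(H (n-1)).eval (lat z))
      = cc q p n * ((H n).eval (lat z) + (1-q^(n-1))*(H (n-2)).eval (lat z)) := by
    match n with
    | 0 => simp [cc0]
    | (k+1) =>
      simp only [show k+1-1 = k from rfl, show k+1-2 = k-1 from rfl]
      exact congrArg (fun t => cc q p (k+1) * t) (Xrec q H hH0 hH1 hHrec k (lat z))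
  have XB : (cc q p n * be q p (n-1)) * (2*lat z*(H (n-3)).eval (lat z))
      = (cc q p n * be q p (n-1)) * ((H (n-2)).eval (lat z)
          + (1-q^(n-3))*(H (n-4)).eval (lat z)) := by
    match n with
    | 0 => simp [cc0]
    | 1 => norm_num [be0]
    | 2 => norm_num [be1]
    | (k+3) =>
      simp only [show k+3-1 = k+2 from rfl, show k+3-2 = k+1 from rfl,
        show k+3-3 = k from rfl, show k+3-4 = k-1 from rfl]
      exact congrArg (fun t => (cc q p (k+3) * be q p (k+2)) * t)
        (Xrec q H hH0 hH1 hHrec k (lat z))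
  have XC : cc q p n * cc q p (n-1) * (2*lat z*(2*lat z*(H (n-2)).eval (lat z)))
      = cc q p n * cc q p (n-1) * ((H n).eval (lat z)
          + ((1-q^(n-1)) + (1-q^(n-2)))*(H (n-2)).eval (lat z)
          + (1-q^(n-2))*(1-q^(n-3))*(H (n-4)).eval (lat z)) := by
    match n with
    | 0 => simp [cc0]
    | 1 => simp [cc0]
    | (k+2) =>
      simp only [show k+2-1 = k+1 from rfl, show k+2-2 = k from rfl,
        show k+2-3 = k-1 from rfl, show k+2-4 = k-2 from rfl]
      have r1 := Xrec q H hH0 hH1 hHrec k (lat z)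
      have r2 := Xrec q H hH0 hH1 hHrec (k+1) (lat z)
      simp only [show k+1-1 = k from rfl] at r2
      have r3 := Xg q H hH0 hH1 hHrec k (lat z)
      linear_combination (cc q p (k+2) * cc q p (k+1) * (2*lat z)) * r1
        + (cc q p (k+2) * cc q p (k+1)) * r2
        + (cc q p (k+2) * cc q p (k+1)) * r3
  rw [hDD, hSD]
  have hM : (2*p/(q-1)) * (q-1) = 2*p := div_mul_cancel₀ _ (q1_ne hq1)
  have hL : (2*q*p*(q^n-1)/(q^n*(q-1)^2)) * (q^n*(q-1)^2) = 2*q*p*(q^n-1) :=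
    div_mul_cancel₀ _ (mul_ne_zero (pow_ne_zero _ hq0) (pow_ne_zero _ (q1_ne hq1)))
  refine mul_left_cancel₀ (show (4*q^n*(q-1)^2 : ℂ) ≠ 0 from
    mul_ne_zero (mul_ne_zero (by norm_num) (pow_ne_zero _ hq0)) (pow_ne_zero _ (q1_ne hq1))) ?_
  linear_combination
    (-(4*q^n*(q-1)*lat z*(cc q p n * (al p (n-1) * (H (n-1)).eval (lat z)
        + be q p (n-1) * (H (n-3)).eval (lat z))))) * hM
    + (4*(H n).eval (lat z)) * hL
    + (q^n*(q-1)^2) * XC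
    + (-(4*p*q^n*(q-1)*al p (n-1))) * XA
    + (-(4*p*q^n*(q-1))) * XB
    + ((H n).eval (lat z)) * idA hq0 hq1 hp n
    + (q^n*(q-1)*(H (n-2)).eval (lat z)) * idB hq0 hq1 hp n
    + (q^n*(q-1)*(H (n-4)).eval (lat z)) * idC hq0 hq1 hp n
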